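/- For every real x₁, the 3×3 real matrix P with columns (0, 0, 1)ᵀ, (1, u, u²/2)ᵀ, (x₁, 1 + u·x₁, u + (u²/2)·x₁)ᵀ satisfies det P = 1 (hence P is invertible) and A_c^TV·P = P·J₁, where J₁ is the matrix with rows (0, 0, 0), (0, u, 1), (0, 0, u); equivalently P⁻¹·A_c^TV·P = J₁. -/
import Mathlib


/-- The Toro–Vázquez convection flux Jacobian of the 1-D Euler system. -/
noncomputable def AcTV (u : ℝ) : Matrix (Fin 3) (Fin 3) ℝ :=
  !![0, 1, 0;
     -u^2, 2*u, 0;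
     -u^3, (3/2)*u^2, 0]

/-- For every real `x₁`, the matrix `P` with columns `(0,0,1)`, `(1,u,u²/2)`,
`(x₁, 1+u·x₁, u+(u²/2)·x₁)` has determinant 1 and conjugates `A_c^TV` to the Jordan
matrix `J₁` with rows `(0,0,0), (0,u,1), (0,0,u)`. -/
theorem jordan_form_AcTV (u x₁ : ℝ) :
    let P : Matrix (Fin 3) (Fin 3) ℝ :=
      !![0, 1, x₁;
         0, u, 1 + u*x₁;
         1, u^2/2, u + (u^2/2)*x₁]
    let J₁ : Matrix (Fin 3) (Fin 3) ℝ :=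
      !![0, 0, 0;
         0, u, 1;
         0, 0, u]
    P.det = 1 ∧ AcTV u * P = P * J₁ ∧ P⁻¹ * AcTV u * P = J₁ := by
  intro P J₁
  have hdet : P.det = 1 := by
    simp [P, Matrix.det_fin_three]; ring
  have hmul : AcTV u * P = P * J₁ := by
    show AcTV u * P = P * J₁
    ext i j
    fin_cases i <;> fin_cases j <;>
      simp [AcTV, P, J₁, Matrix.mul_apply, Fin.sum_univ_three] <;> ring
  refine ⟨hdet, hmul, ?_⟩
  have hinv : IsUnit P.det := by rw [hdet]; exact isUnit_one
  calc P⁻¹ * AcTV u * P = P⁻¹ * (AcTV u * P) := by rw [Matrix.mul_assoc]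
    _ = P⁻¹ * (P * J₁) := by rw [hmul]
    _ = J₁ := by rw [← Matrix.mul_assoc, Matrix.nonsing_inv_mul P hinv, Matrix.one_mul]
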